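/- Let V be a 4-dimensional ℂ-vector space and let f be an endomorphism of V whose matrix in some basis of V is the single Jordan block J(1,4). Then there is a basis of the 6-dimensional space ⋀²V in which the induced endomorphism ⋀²f has matrix diag(J(1,5), J(1,1)). -/

import Mathlib

/-- The `n × n` Jordan block with eigenvalue `lam`: every diagonal entry is `lam` and every
entry directly above the diagonal is `1`. -/
def jordanBlock (lam : ℂ) (n : ℕ) : Matrix (Fin n) (Fin n) ℂ :=
  Matrix.of fun i j : Fin n =>
    if (j : ℕ) = (i : ℕ) then lam else if (j : ℕ) = (i : ℕ) + 1 then 1 else 0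

/-- The wedge `v ∧ w` as an element of the second exterior power `⋀[ℂ]^2 V`. -/
def wedge {V : Type*} [AddCommGroup V] [Module ℂ V] (v w : V) : ⋀[ℂ]^2 V :=
  ⟨ExteriorAlgebra.ι ℂ v * ExteriorAlgebra.ι ℂ w, by
    show _ ∈ LinearMap.range (ExteriorAlgebra.ι ℂ (M := V)) ^ 2
    rw [pow_two]
    exact Submodule.mul_mem_mul (LinearMap.mem_range_self _ v) (LinearMap.mem_range_self _ w)⟩

/-!
Write `fᵢ` for the basis `B` and `N = f - 1`, so `N f₀ = 0` and `N fᵢ₊₁ = fᵢ`. Then `⋀²f = 1 + M`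
with `M (v ∧ w) = N v ∧ w + v ∧ N w + N v ∧ N w`. Iterating `M` from `f₂ ∧ f₃` gives a Jordan chain
of length five ending in `M⁴ (f₂ ∧ f₃) = 2 f₀ ∧ f₁`, and `f₁ ∧ f₂ - f₀ ∧ f₂ - f₀ ∧ f₃` is a second,
independent vector of `ker M`. These six vectors span `⋀²V`, which has dimension `choose 4 2 = 6`,
so they form the required basis.
-/

open Module

section ToMatrix

variable {R W : Type*} [CommSemiring R] [AddCommMonoid W] [Module R W]

theorem LinearMap.toMatrix_eq_iff_apply_basis {ι : Type*} [Fintype ι] [DecidableEq ι]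
    (b : Basis ι R W) (f : W →ₗ[R] W) (A : Matrix ι ι R) :
    LinearMap.toMatrix b b f = A ↔ ∀ j, f (b j) = ∑ i, A i j • b i := by
  rw [← (LinearMap.toMatrix b b).symm.injective.eq_iff, LinearEquiv.symm_apply_apply,
    LinearMap.toMatrix_symm]
  exact ⟨fun h j => by rw [h, Matrix.toLin_self], fun h => b.ext fun j => by
    rw [h, Matrix.toLin_self]⟩

theorem LinearMap.toMatrix_eq_fromBlocks {ι κ : Type*} [Fintype ι] [DecidableEq ι] [Fintype κ]
    [DecidableEq κ] (b : Basis (ι ⊕ κ) R W) (f : W →ₗ[R] W) (A : Matrix ι ι R) (D : Matrix κ κ R)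
    (hA : ∀ j, f (b (.inl j)) = ∑ i, A i j • b (.inl i))
    (hD : ∀ j, f (b (.inr j)) = ∑ i, D i j • b (.inr i)) :
    LinearMap.toMatrix b b f = Matrix.fromBlocks A 0 0 D := by
  rw [LinearMap.toMatrix_eq_iff_apply_basis]
  rintro (j | j) <;> simp [Fintype.sum_sum_type, hA, hD]

end ToMatrix

section JordanChain

variable {W : Type*} [AddCommGroup W] [Module ℂ W]

theorem sum_jordanBlock_zero_smul {n : ℕ} (c : ℂ) (v : Fin (n + 1) → W) :
    ∑ i, jordanBlock c (n + 1) i 0 • v i = c • v 0 := by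
  rw [Fintype.sum_eq_single 0]
  · simp [jordanBlock]
  · intro i hi
    have : (i : ℕ) ≠ 0 := Fin.val_ne_zero_iff.mpr hi
    simp [jordanBlock, this, Ne.symm this]

theorem sum_jordanBlock_succ_smul {n : ℕ} (c : ℂ) (v : Fin (n + 1) → W) (k : Fin n) :
    ∑ i, jordanBlock c (n + 1) i k.succ • v i = c • v k.succ + v k.castSucc := by
  rw [Fintype.sum_eq_add k.succ k.castSucc (Fin.castSucc_lt_succ (i := k)).ne']
  · simp [jordanBlock]
  · rintro i ⟨h1, h2⟩
    rw [Ne, Fin.ext_iff, Fin.val_succ] at h1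
    rw [Ne, Fin.ext_iff, Fin.val_castSucc] at h2
    simp [jordanBlock, Ne.symm h1, Ne.symm h2]

def IsJordanChain {n : ℕ} (f : W →ₗ[ℂ] W) (c : ℂ) (v : Fin (n + 1) → W) : Prop :=
  f (v 0) = c • v 0 ∧ ∀ k : Fin n, f (v k.succ) = c • v k.succ + v k.castSucc

theorem isJordanChain_iff_apply_eq_sum {n : ℕ} (f : W →ₗ[ℂ] W) (c : ℂ) (v : Fin (n + 1) → W) :
    IsJordanChain f c v ↔ ∀ j, f (v j) = ∑ i, jordanBlock c (n + 1) i j • v i := by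
  rw [Fin.forall_fin_succ, sum_jordanBlock_zero_smul]
  simp only [sum_jordanBlock_succ_smul, IsJordanChain]

theorem LinearMap.toMatrix_eq_jordanBlock_iff {n : ℕ} (b : Basis (Fin (n + 1)) ℂ W)
    (f : W →ₗ[ℂ] W) (c : ℂ) :
    LinearMap.toMatrix b b f = jordanBlock c (n + 1) ↔ IsJordanChain f c b := by
  rw [LinearMap.toMatrix_eq_iff_apply_basis, isJordanChain_iff_apply_eq_sum]

end JordanChain

section Wedge

open ExteriorAlgebra

variable {V : Type*} [AddCommGroup V] [Module ℂ V]

theorem wedge_add_left (v v' w : V) : wedge (v + v') w = wedge v w + wedge v' w := by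
  apply Subtype.ext; simp [wedge, add_mul]

theorem wedge_add_right (v w w' : V) : wedge v (w + w') = wedge v w + wedge v w' := by
  apply Subtype.ext; simp [wedge, mul_add]

theorem wedge_self (v : V) : wedge v v = 0 := by
  apply Subtype.ext; simp [wedge]

theorem wedge_swap (v w : V) : wedge w v = -wedge v w := by
  apply Subtype.ext
  exact eq_neg_of_add_eq_zero_left (ι_add_mul_swap (R := ℂ) w v)

theorem exteriorPower.ιMulti_two_eq_wedge (a : Fin 2 → V) :
    exteriorPower.ιMulti ℂ 2 a = wedge (a 0) (a 1) := by
  apply Subtype.ext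
  simp [ιMulti_apply, wedge, Matrix.vecTail]

theorem span_wedge_eq_top {ι : Type*} {b : ι → V} (hb : Submodule.span ℂ (Set.range b) = ⊤) :
    Submodule.span ℂ (Set.range fun p : ι × ι => wedge (b p.1) (b p.2)) = ⊤ := by
  refine eq_top_iff.2 ((exteriorPower.ιMulti_span_of_span ℂ 2 V hb).ge.trans
    (Submodule.span_mono ?_))
  rintro _ ⟨a, ha, rfl⟩
  obtain ⟨i, hi⟩ := ha (Set.mem_range_self 0)
  obtain ⟨j, hj⟩ := ha (Set.mem_range_self 1)
  exact ⟨(i, j), by simp [exteriorPower.ιMulti_two_eq_wedge, hi, hj]⟩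

end Wedge

section ExteriorSquareJ4

variable {V : Type*} [AddCommGroup V] [Module ℂ V] (B : Basis (Fin 4) ℂ V)

noncomputable def wedgeJordanChain : Fin 5 → ⋀[ℂ]^2 V :=
  ![(2 : ℂ) • wedge (B 0) (B 1),
    (3 : ℂ) • wedge (B 0) (B 1) + (2 : ℂ) • wedge (B 0) (B 2),
    wedge (B 0) (B 1) + (2 : ℂ) • wedge (B 0) (B 2) + wedge (B 0) (B 3) + wedge (B 1) (B 2),
    wedge (B 1) (B 2) + wedge (B 1) (B 3),
    wedge (B 2) (B 3)]

noncomputable def wedgeEigenvector : ⋀[ℂ]^2 V :=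
  wedge (B 1) (B 2) - wedge (B 0) (B 2) - wedge (B 0) (B 3)

variable {B}

theorem isJordanChain_wedgeJordanChain_and_wedgeEigenvector {f : V →ₗ[ℂ] V}
    (hf : IsJordanChain f 1 B) {g : (⋀[ℂ]^2 V) →ₗ[ℂ] (⋀[ℂ]^2 V)}
    (hg : ∀ v w : V, g (wedge v w) = wedge (f v) (f w)) :
    IsJordanChain g 1 (wedgeJordanChain B) ∧ IsJordanChain g 1 ![wedgeEigenvector B] := by
  obtain ⟨h0, hs⟩ := hf
  have h1 : f (B 1) = B 1 + B 0 := by simpa using hs 0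
  have h2 : f (B 2) = B 2 + B 1 := by simpa using hs 1
  have h3 : f (B 3) = B 3 + B 2 := by simpa using hs 2
  rw [one_smul] at h0
  simp only [IsJordanChain, one_smul, Fin.forall_fin_succ, IsEmpty.forall_iff, and_true,
    Fin.reduceSucc, Fin.reduceCastSucc, Fin.succ_zero_eq_one, Fin.castSucc_zero]
  simp only [wedgeJordanChain, wedgeEigenvector, Matrix.cons_val, map_add, map_sub, map_smul, hg,
    h0, h1, h2, h3, wedge_add_left, wedge_add_right, wedge_self]
  and_intros <;> module

theorem top_le_span_wedgeJordanChain_wedgeEigenvector :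
    ⊤ ≤ Submodule.span ℂ
      (Set.range (Sum.elim (wedgeJordanChain B) ![wedgeEigenvector B])) := by
  set S := Submodule.span ℂ (Set.range (Sum.elim (wedgeJordanChain B) ![wedgeEigenvector B]))
  have mem (x : ⋀[ℂ]^2 V) (c : Fin 5 → ℂ) (d : ℂ)
      (hx : x = ∑ i, c i • wedgeJordanChain B i + d • wedgeEigenvector B) : x ∈ S :=
    (Submodule.mem_span_range_iff_exists_fun ℂ).2
      ⟨Sum.elim c ![d], by simp [Fintype.sum_sum_type, hx]⟩
  -- the coefficients are the columns of the inverse of the change-of-basis matrix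
  obtain ⟨h01, h02, h03, h12, h13, h23⟩ :
      wedge (B 0) (B 1) ∈ S ∧ wedge (B 0) (B 2) ∈ S ∧ wedge (B 0) (B 3) ∈ S ∧
        wedge (B 1) (B 2) ∈ S ∧ wedge (B 1) (B 3) ∈ S ∧ wedge (B 2) (B 3) ∈ S := by
    refine ⟨mem _ ![1/2, 0, 0, 0, 0] 0 ?_, mem _ ![-3/4, 1/2, 0, 0, 0] 0 ?_,
      mem _ ![7/8, -3/4, 1/2, 0, 0] (-1/2) ?_, mem _ ![1/8, -1/4, 1/2, 0, 0] (1/2) ?_,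
      mem _ ![-1/8, 1/4, -1/2, 1, 0] (-1/2) ?_, mem _ ![0, 0, 0, 0, 1] 0 ?_⟩ <;>
    · simp only [Fin.sum_univ_five, wedgeJordanChain, wedgeEigenvector, Matrix.cons_val]
      module
  rw [← span_wedge_eq_top B.span_eq, Submodule.span_le]
  rintro _ ⟨⟨i, j⟩, rfl⟩
  fin_cases i <;> fin_cases j <;>
    simp [wedge_self, wedge_swap (B 0) (B 1), wedge_swap (B 0) (B 2), wedge_swap (B 0) (B 3),
      wedge_swap (B 1) (B 2), wedge_swap (B 1) (B 3), wedge_swap (B 2) (B 3), *]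

variable (B) in
noncomputable def wedgeJordanBasis : Basis (Fin 5 ⊕ Fin 1) ℂ (⋀[ℂ]^2 V) :=
  basisOfTopLeSpanOfCardEqFinrank _ (top_le_span_wedgeJordanChain_wedgeEigenvector (B := B)) <| by
    have : Module.Finite ℂ V := .of_basis B
    rw [exteriorPower.finrank_eq, finrank_eq_card_basis B]
    rfl

end ExteriorSquareJ4

theorem exterior_square_jordan_J4_general (V : Type*) [AddCommGroup V] [Module ℂ V]
    (f : V →ₗ[ℂ] V)
    (B : Module.Basis (Fin 4) ℂ V)
    (hB : LinearMap.toMatrix B B f = jordanBlock 1 4)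
    (g : (⋀[ℂ]^2 V) →ₗ[ℂ] (⋀[ℂ]^2 V))
    (hg : ∀ v w : V, g (wedge v w) = wedge (f v) (f w)) :
    ∃ C : Module.Basis (Fin 5 ⊕ Fin 1) ℂ (⋀[ℂ]^2 V),
      LinearMap.toMatrix C C g = Matrix.fromBlocks (jordanBlock 1 5) 0 0 (jordanBlock 1 1) := by
  obtain ⟨hchain, heigen⟩ := isJordanChain_wedgeJordanChain_and_wedgeEigenvector
    ((LinearMap.toMatrix_eq_jordanBlock_iff B f 1).1 hB) hg
  refine ⟨wedgeJordanBasis B, LinearMap.toMatrix_eq_fromBlocks _ _ _ _ (fun j => ?_) fun j => ?_⟩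
  · simpa [wedgeJordanBasis] using (isJordanChain_iff_apply_eq_sum _ _ _).1 hchain j
  · simpa [wedgeJordanBasis] using (isJordanChain_iff_apply_eq_sum _ _ _).1 heigen j

/-- If the matrix of the endomorphism `f` of the 4-dimensional ℂ-vector space `V` in some basis is the single Jordan block J(1,4), then in some basis of the 6-dimensional space ⋀²V the induced endomorphism ⋀²f (characterized by `v ∧ w ↦ f v ∧ f w`) has matrix diag(J(1,5), J(1,1)). -/
theorem exterior_square_jordan_J4 (V : Type*) [AddCommGroup V] [Module ℂ V]
    (hdim : Module.finrank ℂ V = 4)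
    (f : V →ₗ[ℂ] V)
    (B : Module.Basis (Fin 4) ℂ V)
    (hB : LinearMap.toMatrix B B f = jordanBlock 1 4)
    (g : (⋀[ℂ]^2 V) →ₗ[ℂ] (⋀[ℂ]^2 V))
    (hg : ∀ v w : V, g (wedge v w) = wedge (f v) (f w)) :
    ∃ C : Module.Basis (Fin 5 ⊕ Fin 1) ℂ (⋀[ℂ]^2 V),
      LinearMap.toMatrix C C g = Matrix.fromBlocks (jordanBlock 1 5) 0 0 (jordanBlock 1 1) :=
  exterior_square_jordan_J4_general V f B hB g hg
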